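/- Let {ξₙ}ₙ≥1 be a sequence of Bochner integrable functions from I = [0,a] into a Banach space V such that ‖ξₙ(τ)‖ ≤ q̂(τ) for each n ≥ 1 and almost all τ ∈ I, where q̂ ∈ L¹(I, ℝ⁺). Then the function ĝ(τ) = μ({ξₙ(τ) : n ≥ 1}) belongs to L¹(I, ℝ⁺) and satisfies μ({∫₀^τ ξₙ(t) dt : n ≥ 1}) ≤ 2 ∫₀^τ ĝ(t) dt for every τ ∈ I. -/

import Mathlib

/-! Fix a dense sequence `e` in `V` and let `r_N(t)` be the least radius `r` such that every
`ξₙ(t)` lies within `r` of one of `e 0, …, e N`. As `N → ∞`, `r_N(t)` decreases to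
`ĝ(t) = μ({ξₙ(t)})`, which makes `ĝ` measurable, hence integrable (it is bounded by `q̂`).
Sending `ξₙ(t)` to its nearest point among `e 0, …, e N` yields simple functions `ηₙ` with values
in a fixed finite set, so all `∫ ηₙ` lie in one compact set, and `∫ ξₙ` is within `∫ r_N` of
it. Thus `μ({∫ ξₙ}) ≤ ∫ r_N → ∫ ĝ`: in a separable space the constant `2` can be taken to be `1`.
-/

open Metric Set MeasureTheory

/-- Hausdorff measure of noncompactness: infimum of ε > 0 such that B has a finite ε-net. -/
noncomputable def hausdorffMNC {X : Type*} [MetricSpace X] (B : Set X) : ℝ :=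
  sInf {ε : ℝ | 0 < ε ∧ ∃ F : Finset X, B ⊆ ⋃ x ∈ F, Metric.ball x ε}

open Filter Topology TopologicalSpace

open MeasureTheory.SimpleFunc (nearestPt)

section MetricSpace

variable {X : Type*} [MetricSpace X]

theorem hausdorffMNC_nonneg (B : Set X) : 0 ≤ hausdorffMNC B :=
  Real.sInf_nonneg fun _ hε => hε.1.le

theorem hausdorffMNC_le_of_subset_iUnion_ball {B : Set X} {r : ℝ} (hr : 0 < r) (F : Finset X)
    (hB : B ⊆ ⋃ x ∈ F, ball x r) : hausdorffMNC B ≤ r :=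
  csInf_le ⟨0, fun _ hε => hε.1.le⟩ ⟨hr, F, hB⟩

theorem hausdorffMNC_le_of_isCompact {B K : Set X} {r : ℝ} (hK : IsCompact K) (hr : 0 ≤ r)
    (hB : ∀ b ∈ B, ∃ k ∈ K, dist b k ≤ r) : hausdorffMNC B ≤ r := by
  refine le_of_forall_pos_le_add fun δ hδ => ?_
  obtain ⟨F, -, hKF⟩ := hK.elim_nhds_subcover _ fun x _ => ball_mem_nhds x hδ
  refine hausdorffMNC_le_of_subset_iUnion_ball (by positivity) F fun b hb => ?_
  obtain ⟨k, hk, hbk⟩ := hB b hb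
  obtain ⟨y, hy, hky⟩ := mem_iUnion₂.1 (hKF hk)
  exact mem_iUnion₂.2 ⟨y, hy, (dist_triangle b k y).trans_lt (by linarith [mem_ball.1 hky])⟩

theorem exists_finset_subset_iUnion_ball_of_hausdorffMNC_lt {B : Set X}
    (hB : Bornology.IsBounded B) {r : ℝ} (h : hausdorffMNC B < r) :
    ∃ F : Finset X, B ⊆ ⋃ x ∈ F, ball x r := by
  rcases B.eq_empty_or_nonempty with rfl | ⟨c, -⟩
  · exact ⟨∅, empty_subset _⟩
  obtain ⟨R, hR, hBR⟩ := hB.subset_ball_lt 0 c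
  obtain ⟨ε, ⟨-, F, hF⟩, hεr⟩ := exists_lt_of_csInf_lt
    (s := {ε : ℝ | 0 < ε ∧ ∃ F : Finset X, B ⊆ ⋃ x ∈ F, ball x ε})
    ⟨R, hR, {c}, by simpa only [Finset.mem_singleton, iUnion_iUnion_eq_left] using hBR⟩ h
  exact ⟨F, hF.trans (iUnion₂_mono fun x _ => ball_subset_ball hεr.le)⟩

end MetricSpace

section NearestPt

variable {X : Type*} [MetricSpace X] [MeasurableSpace X] [OpensMeasurableSpace X] (e : ℕ → X)

theorem dist_nearestPt_le (x : X) {k N : ℕ} (hk : k ≤ N) :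
    dist (nearestPt e N x) x ≤ dist (e k) x := by
  simpa only [edist_dist, ENNReal.ofReal_le_ofReal_iff dist_nonneg]
    using SimpleFunc.edist_nearestPt_le e x hk

theorem nearestPt_mem_image (N : ℕ) (x : X) : nearestPt e N x ∈ e '' Iic N :=
  mem_image_of_mem e (SimpleFunc.nearestPtInd_le e N x)

/-- Junk value `0` when `range f` is unbounded, hence the boundedness hypotheses below. -/
noncomputable def nearestPtRadius (N : ℕ) (f : ℕ → X) : ℝ :=
  ⨆ n, dist (nearestPt e N (f n)) (f n)

variable {e} {f : ℕ → X}

theorem nearestPtRadius_nonneg (N : ℕ) (f : ℕ → X) : 0 ≤ nearestPtRadius e N f :=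
  Real.iSup_nonneg fun _ => dist_nonneg

theorem nearestPtRadius_le {M : ℝ} (hM : ∀ n, dist (e 0) (f n) ≤ M) (N : ℕ) :
    nearestPtRadius e N f ≤ M :=
  ciSup_le fun n => (dist_nearestPt_le e (f n) N.zero_le).trans (hM n)

theorem dist_nearestPt_le_nearestPtRadius (hf : Bornology.IsBounded (range f)) (N n : ℕ) :
    dist (nearestPt e N (f n)) (f n) ≤ nearestPtRadius e N f := by
  obtain ⟨R, hR⟩ := hf.subset_closedBall (e 0)
  refine le_ciSup (f := fun n => dist (nearestPt e N (f n)) (f n))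
    ⟨R, forall_mem_range.2 fun m => ?_⟩ n
  exact (dist_nearestPt_le e (f m) N.zero_le).trans
    (mem_closedBall_comm.1 (hR (mem_range_self m)))

theorem antitone_nearestPtRadius (hf : Bornology.IsBounded (range f)) :
    Antitone fun N => nearestPtRadius e N f := fun N _ hNM =>
  ciSup_le fun n =>
    (dist_nearestPt_le e (f n) ((SimpleFunc.nearestPtInd_le e N (f n)).trans hNM)).trans
      (dist_nearestPt_le_nearestPtRadius hf N n)

theorem hausdorffMNC_range_le_nearestPtRadius (hf : Bornology.IsBounded (range f)) (N : ℕ) :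
    hausdorffMNC (range f) ≤ nearestPtRadius e N f :=
  hausdorffMNC_le_of_isCompact ((finite_Iic N).image e).isCompact (nearestPtRadius_nonneg N f)
    (forall_mem_range.2 fun n => ⟨_, nearestPt_mem_image e N (f n),
      dist_comm (f n) _ ▸ dist_nearestPt_le_nearestPtRadius hf N n⟩)

theorem exists_nearestPtRadius_le (he : DenseRange e) (hf : Bornology.IsBounded (range f))
    {ε : ℝ} (hε : 0 < ε) : ∃ N, nearestPtRadius e N f ≤ hausdorffMNC (range f) + ε := by
  obtain ⟨F, hF⟩ := exists_finset_subset_iUnion_ball_of_hausdorffMNC_lt hf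
    (lt_add_of_pos_right (hausdorffMNC (range f)) (half_pos hε))
  choose k hk using fun x => he.exists_dist_lt x (half_pos hε)
  refine ⟨F.sup k, ciSup_le fun n => ?_⟩
  obtain ⟨x, hx, hnx⟩ := mem_iUnion₂.1 (hF (mem_range_self n))
  calc dist (nearestPt e (F.sup k) (f n)) (f n) ≤ dist (e (k x)) (f n) :=
        dist_nearestPt_le e (f n) (Finset.le_sup hx)
    _ ≤ dist (e (k x)) x + dist x (f n) := dist_triangle _ _ _
    _ ≤ hausdorffMNC (range f) + ε := by
        linarith [dist_comm x (e (k x)) ▸ hk x, dist_comm (f n) x ▸ mem_ball.1 hnx]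

theorem tendsto_nearestPtRadius (he : DenseRange e) (hf : Bornology.IsBounded (range f)) :
    Tendsto (fun N => nearestPtRadius e N f) atTop (𝓝 (hausdorffMNC (range f))) := by
  refine tendsto_order.2 ⟨fun b hb => Eventually.of_forall fun N =>
    hb.trans_le (hausdorffMNC_range_le_nearestPtRadius hf N), fun b hb => ?_⟩
  obtain ⟨N, hN⟩ := exists_nearestPtRadius_le he hf (half_pos (sub_pos.2 hb))
  exact eventually_atTop.2 ⟨N, fun M hM => (antitone_nearestPtRadius hf hM).trans_lt (by linarith)⟩

end NearestPt

section Integral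

variable {α V : Type*} [MeasurableSpace α] {μ : Measure α} [NormedAddCommGroup V]
  {f : ℕ → α → V} {q : α → ℝ}

theorem hausdorffMNC_range_le_of_norm_le {v : ℕ → V} {M : ℝ} (hM : ∀ n, ‖v n‖ ≤ M) :
    hausdorffMNC (range v) ≤ M :=
  hausdorffMNC_le_of_isCompact isCompact_singleton ((norm_nonneg _).trans (hM 0))
    (forall_mem_range.2 fun n => ⟨0, rfl, (dist_zero_right (v n)).symm ▸ hM n⟩)

theorem exists_isCompact_forall_integral_mem [NormedSpace ℝ V] [CompleteSpace V]
    [IsFiniteMeasure μ] (T : Finset V) :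
    ∃ K, IsCompact K ∧ ∀ s : SimpleFunc α V, s.range ⊆ T → ∫ t, s t ∂μ ∈ K := by
  refine ⟨(fun c : T → ℝ => ∑ x, c x • (x : V)) '' univ.pi fun _ => Icc 0 (μ.real univ),
    (isCompact_univ_pi fun _ => isCompact_Icc).image (by fun_prop), fun s hs => ?_⟩
  refine ⟨fun x => μ.real (s ⁻¹' {(x : V)}),
    fun x _ => ⟨measureReal_nonneg, measureReal_mono (subset_univ _)⟩, ?_⟩
  dsimp only
  rw [SimpleFunc.integral_eq_sum s (s.integrable_of_isFiniteMeasure),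
    Finset.sum_coe_sort T fun x => μ.real (s ⁻¹' {x}) • x]
  refine (Finset.sum_subset hs fun x _ hx => ?_).symm
  rw [preimage_singleton_eq_empty.2 (mt SimpleFunc.mem_range.2 hx), measureReal_empty, zero_smul]

variable [MeasurableSpace V] [BorelSpace V]

theorem exists_measurable_ae_eq_seq (hf : ∀ n, AEStronglyMeasurable (f n) μ) :
    ∃ g : ℕ → α → V, (∀ n, Measurable (g n)) ∧ ∀ᵐ t ∂μ, ∀ n, f n t = g n t :=
  ⟨fun n => (hf n).mk (f n), fun n => (hf n).stronglyMeasurable_mk.measurable,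
    ae_all_iff.2 fun n => (hf n).ae_eq_mk⟩

theorem hausdorffMNC_range_integral_le_integral_nearestPtRadius [NormedSpace ℝ V]
    [CompleteSpace V] [IsFiniteMeasure μ] (e : ℕ → V) (N : ℕ)
    (hf : ∀ n, Measurable (f n)) (hfi : ∀ n, Integrable (f n) μ)
    (hb : ∀ᵐ t ∂μ, Bornology.IsBounded (range (f · t)))
    (hr : Integrable (fun t => nearestPtRadius e N (f · t)) μ) :
    hausdorffMNC (range fun n => ∫ t, f n t ∂μ) ≤ ∫ t, nearestPtRadius e N (f · t) ∂μ := by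
  classical
  obtain ⟨K, hK, hKint⟩ :=
    exists_isCompact_forall_integral_mem (μ := μ) ((Finset.range (N + 1)).image e)
  refine hausdorffMNC_le_of_isCompact hK (integral_nonneg fun t => nearestPtRadius_nonneg N _)
    (forall_mem_range.2 fun n => ?_)
  set η := (nearestPt e N).comp (f n) (hf n)
  refine ⟨∫ t, η t ∂μ, hKint η fun x hx => ?_, ?_⟩
  · obtain ⟨t, rfl⟩ := SimpleFunc.mem_range.1 hx
    obtain ⟨k, hk, hke⟩ := nearestPt_mem_image e N (f n t)
    exact Finset.mem_image.2 ⟨k, Finset.mem_range_succ_iff.2 hk, hke⟩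
  · rw [dist_eq_norm, ← integral_sub (hfi n) η.integrable_of_isFiniteMeasure]
    refine norm_integral_le_of_norm_le hr (hb.mono fun t ht => ?_)
    rw [← dist_eq_norm, dist_comm]
    exact dist_nearestPt_le_nearestPtRadius ht N n

variable [SecondCountableTopology V]

theorem measurable_nearestPtRadius (e : ℕ → V) (N : ℕ) (hf : ∀ n, Measurable (f n)) :
    Measurable fun t => nearestPtRadius e N (f · t) :=
  .iSup fun n => ((SimpleFunc.measurable _).comp (hf n)).dist (hf n)

theorem integrable_hausdorffMNC_range (hf : ∀ n, AEStronglyMeasurable (f n) μ)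
    (hq : Integrable q μ) (hb : ∀ᵐ t ∂μ, ∀ n, ‖f n t‖ ≤ q t) :
    Integrable (fun t => hausdorffMNC (range (f · t))) μ := by
  obtain ⟨g, hg, hfg⟩ := exists_measurable_ae_eq_seq hf
  have hgb : ∀ᵐ t ∂μ, ∀ n, ‖g n t‖ ≤ q t :=
    (hfg.and hb).mono fun t ht n => ht.1 n ▸ ht.2 n
  have hgbdd : ∀ᵐ t ∂μ, Bornology.IsBounded (range (g · t)) :=
    hgb.mono fun t ht => isBounded_iff_forall_norm_le.2 ⟨q t, forall_mem_range.2 ht⟩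
  have : Nonempty V := ⟨0⟩
  have hmeas : AEStronglyMeasurable (fun t => hausdorffMNC (range (g · t))) μ :=
    aestronglyMeasurable_of_tendsto_ae atTop
      (fun N => (measurable_nearestPtRadius (denseSeq V) N hg).aestronglyMeasurable)
      (hgbdd.mono fun _ => tendsto_nearestPtRadius (denseRange_denseSeq V))
  refine hq.mono' (hmeas.congr (hfg.mono fun t ht => by simp only [ht]))
    (hb.mono fun t ht => ?_)
  rw [Real.norm_of_nonneg (hausdorffMNC_nonneg _)]
  exact hausdorffMNC_range_le_of_norm_le ht

theorem hausdorffMNC_range_integral_le [NormedSpace ℝ V] [CompleteSpace V] [IsFiniteMeasure μ]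
    (hf : ∀ n, Integrable (f n) μ) (hq : Integrable q μ)
    (hb : ∀ᵐ t ∂μ, ∀ n, ‖f n t‖ ≤ q t) :
    hausdorffMNC (range fun n => ∫ t, f n t ∂μ) ≤ ∫ t, hausdorffMNC (range (f · t)) ∂μ := by
  obtain ⟨g, hg, hfg⟩ := exists_measurable_ae_eq_seq fun n => (hf n).1
  have hgi (n : ℕ) : Integrable (g n) μ := (hf n).congr (ae_all_iff.1 hfg n)
  have hgb : ∀ᵐ t ∂μ, ∀ n, ‖g n t‖ ≤ q t :=
    (hfg.and hb).mono fun t ht n => ht.1 n ▸ ht.2 n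
  have hgbdd : ∀ᵐ t ∂μ, Bornology.IsBounded (range (g · t)) :=
    hgb.mono fun t ht => isBounded_iff_forall_norm_le.2 ⟨q t, forall_mem_range.2 ht⟩
  have hint : (fun n => ∫ t, f n t ∂μ) = fun n => ∫ t, g n t ∂μ :=
    funext fun n => integral_congr_ae (ae_all_iff.1 hfg n)
  rw [hint, integral_congr_ae (g := fun t => hausdorffMNC (range (g · t)))
    (hfg.mono fun t ht => by simp only [ht])]
  have : Nonempty V := ⟨0⟩
  set e := denseSeq V
  have hr_le (N : ℕ) : ∀ᵐ t ∂μ, ‖nearestPtRadius e N (g · t)‖ ≤ ‖e 0‖ + q t :=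
    hgb.mono fun t ht => by
      rw [Real.norm_of_nonneg (nearestPtRadius_nonneg N _)]
      exact nearestPtRadius_le (fun n => (dist_le_norm_add_norm _ _).trans (by linarith [ht n])) N
  have hr_int (N : ℕ) : Integrable (fun t => nearestPtRadius e N (g · t)) μ :=
    ((integrable_const _).add hq).mono' (measurable_nearestPtRadius e N hg).aestronglyMeasurable
      (hr_le N)
  refine ge_of_tendsto' (tendsto_integral_of_dominated_convergence _
    (fun N => (hr_int N).1) ((integrable_const _).add hq) hr_le
    (hgbdd.mono fun _ => tendsto_nearestPtRadius (denseRange_denseSeq V))) fun N =>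
      hausdorffMNC_range_integral_le_integral_nearestPtRadius e N hg hgi hgbdd (hr_int N)

end Integral

theorem hausdorffMNC_integral_seq_le_general {V : Type*} [NormedAddCommGroup V]
    [NormedSpace ℝ V] [CompleteSpace V] [SecondCountableTopology V]
    [MeasurableSpace V] [BorelSpace V]
    (a : ℝ) (ξ : ℕ → ℝ → V) (qhat : ℝ → ℝ)
    (hq : IntegrableOn qhat (Icc 0 a))
    (hξint : ∀ n, IntegrableOn (ξ n) (Icc 0 a))
    (hbound : ∀ n, ∀ᵐ τ ∂(volume.restrict (Icc 0 a)), ‖ξ n τ‖ ≤ qhat τ) :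
    IntegrableOn (fun τ => hausdorffMNC {v : V | ∃ n : ℕ, ξ n τ = v}) (Icc 0 a) ∧
      ∀ τ ∈ Icc 0 a,
        hausdorffMNC {v : V | ∃ n : ℕ, (∫ t in (0:ℝ)..τ, ξ n t) = v} ≤
          2 * ∫ t in (0:ℝ)..τ, hausdorffMNC {v : V | ∃ n : ℕ, ξ n t = v} := by
  have hb := ae_all_iff.2 hbound
  refine ⟨integrable_hausdorffMNC_range (fun n => (hξint n).1) hq hb, fun τ hτ => ?_⟩
  have hsub : Ioc 0 τ ⊆ Icc 0 a := Ioc_subset_Icc_self.trans (Icc_subset_Icc_right hτ.2)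
  have : IsFiniteMeasure (volume.restrict (Ioc (0 : ℝ) τ)) :=
    isFiniteMeasure_restrict.2 measure_Ioc_lt_top.ne
  simp only [intervalIntegral.integral_of_le hτ.1]
  calc _ ≤ ∫ t in Ioc 0 τ, hausdorffMNC (range (ξ · t)) :=
        hausdorffMNC_range_integral_le (fun n => (hξint n).mono_set hsub) (hq.mono_set hsub)
          (ae_restrict_of_ae_restrict_of_subset hsub hb)
    _ ≤ 2 * ∫ t in Ioc 0 τ, hausdorffMNC (range (ξ · t)) :=
        le_mul_of_one_le_left (integral_nonneg fun t => hausdorffMNC_nonneg _) one_le_two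

theorem hausdorffMNC_integral_seq_le {V : Type*} [NormedAddCommGroup V]
    [NormedSpace ℝ V] [CompleteSpace V] [SecondCountableTopology V]
    [MeasurableSpace V] [BorelSpace V]
    (a : ℝ) (ha : 0 < a) (ξ : ℕ → ℝ → V) (qhat : ℝ → ℝ)
    (hq : IntegrableOn qhat (Icc 0 a)) (hqpos : ∀ τ ∈ Icc 0 a, 0 ≤ qhat τ)
    (hξint : ∀ n, IntegrableOn (ξ n) (Icc 0 a))
    (hbound : ∀ n, ∀ᵐ τ ∂(volume.restrict (Icc 0 a)), ‖ξ n τ‖ ≤ qhat τ) :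
    IntegrableOn (fun τ => hausdorffMNC {v : V | ∃ n : ℕ, ξ n τ = v}) (Icc 0 a) ∧
      ∀ τ ∈ Icc 0 a,
        hausdorffMNC {v : V | ∃ n : ℕ, (∫ t in (0:ℝ)..τ, ξ n t) = v} ≤
          2 * ∫ t in (0:ℝ)..τ, hausdorffMNC {v : V | ∃ n : ℕ, ξ n t = v} :=
  hausdorffMNC_integral_seq_le_general a ξ qhat hq hξint hbound
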